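/- arXiv:2605.06920 — 5 statements merged into one kernel-verified Lean document; each statement's English description precedes it below -/
import Mathlib

section
/- Let v, v̂ : 2^N → [0,1] be value functions with v(N) = v̂(N) = 1 and v(∅) = v̂(∅) = 0, and let δ = max_{S ⊆ N} |v(S) − v̂(S)|. Let ε̂ be the least core deficit of v̂ and ε* the least core deficit of v. Then the ε̂-core of v̂ is contained in the (ε̂ + δ)-core of v, which in turn is contained in the (ε* + 2δ)-core of v. -/
open Finset

/-- The ε-core of a value function `w` on coalitions of `Fin n`. -/
def epsCore (n : ℕ) (w : Finset (Fin n) → ℝ) (ε : ℝ) : Set (Fin n → ℝ) :=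
  {u | (∀ i, 0 ≤ u i ∧ u i ≤ 1) ∧ (∑ i, u i) = 1 ∧
    ∀ S : Finset (Fin n), w S - ε ≤ ∑ i ∈ S, u i}

/-- The least core deficit: the least ε ≥ 0 for which the ε-core is nonempty. -/
noncomputable def leastDeficit (n : ℕ) (w : Finset (Fin n) → ℝ) : ℝ :=
  sInf {ε : ℝ | 0 ≤ ε ∧ (epsCore n w ε).Nonempty}

lemma epsCore_mono (n : ℕ) (w : Finset (Fin n) → ℝ) {ε ε' : ℝ} (h : ε ≤ ε') :
    epsCore n w ε ⊆ epsCore n w ε' := by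
  rintro u ⟨h1, h2, h3⟩
  exact ⟨h1, h2, fun S => le_trans (by linarith [h3 S]) (h3 S)⟩

lemma epsCore_cross (n : ℕ) (w w' : Finset (Fin n) → ℝ) {ε δ : ℝ}
    (hδ : ∀ S, |w S - w' S| ≤ δ) {u : Fin n → ℝ} (hu : u ∈ epsCore n w ε) :
    u ∈ epsCore n w' (ε + δ) := by
  obtain ⟨h1, h2, h3⟩ := hu
  refine ⟨h1, h2, fun S => ?_⟩
  have := abs_le.mp (hδ S)
  linarith [h3 S]

lemma one_mem_deficit_set (n : ℕ) (hn : 0 < n) (w : Finset (Fin n) → ℝ)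
    (hw : ∀ S, w S ∈ Set.Icc (0:ℝ) 1) :
    (1:ℝ) ∈ {ε : ℝ | 0 ≤ ε ∧ (epsCore n w ε).Nonempty} := by
  have hn' : (1:ℝ) ≤ (n:ℝ) := by exact_mod_cast hn
  have hpos : (0:ℝ) < (n:ℝ) := by positivity
  refine ⟨zero_le_one, ⟨fun _ => 1 / n, ?_, ?_, ?_⟩⟩
  · intro i
    constructor
    · positivity
    · rw [div_le_one hpos]; exact hn'
  · rw [Finset.sum_const, card_univ, Fintype.card_fin, nsmul_eq_mul,
      mul_one_div, div_self (ne_of_gt hpos)]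
  · intro S
    have h1 : w S ≤ 1 := (hw S).2
    have h2 : (0:ℝ) ≤ ∑ _i ∈ S, (1:ℝ) / n :=
      Finset.sum_nonneg fun i _ => by positivity
    linarith

/-- Corollary 3.2: core containment under estimation error `δ`. -/
theorem stmt1 (n : ℕ) (v vh : Finset (Fin n) → ℝ)
    (hv01 : ∀ S, v S ∈ Set.Icc (0:ℝ) 1) (hvh01 : ∀ S, vh S ∈ Set.Icc (0:ℝ) 1)
    (hvN : v Finset.univ = 1) (hvhN : vh Finset.univ = 1)
    (hv0 : v ∅ = 0) (hvh0 : vh ∅ = 0)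
    (δ : ℝ) (hδ : δ = ⨆ S : Finset (Fin n), |v S - vh S|) :
    epsCore n vh (leastDeficit n vh) ⊆ epsCore n v (leastDeficit n vh + δ) ∧
    epsCore n v (leastDeficit n vh + δ) ⊆ epsCore n v (leastDeficit n v + 2 * δ) := by
  have hn : 0 < n := by
    by_contra h
    push_neg at h
    interval_cases n
    rw [Finset.univ_eq_empty, hv0] at hvN
    norm_num at hvN
  have hδle : ∀ S, |v S - vh S| ≤ δ := by
    intro S
    rw [hδ]
    exact le_ciSup (f := fun S => |v S - vh S|) (Set.Finite.bddAbove (Set.finite_range _)) S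
  have hδle' : ∀ S, |vh S - v S| ≤ δ := fun S => by
    rw [abs_sub_comm]; exact hδle S
  have hδ0 : 0 ≤ δ := le_trans (abs_nonneg _) (hδle ∅)
  have hbddv : BddBelow {ε : ℝ | 0 ≤ ε ∧ (epsCore n v ε).Nonempty} :=
    ⟨0, fun ε hε => hε.1⟩
  have hbddvh : BddBelow {ε : ℝ | 0 ≤ ε ∧ (epsCore n vh ε).Nonempty} :=
    ⟨0, fun ε hε => hε.1⟩
  have hnev : {ε : ℝ | 0 ≤ ε ∧ (epsCore n v ε).Nonempty}.Nonempty :=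
    ⟨1, one_mem_deficit_set n hn v hv01⟩
  -- ε̂ ≤ ε* + δ
  have hkey : leastDeficit n vh ≤ leastDeficit n v + δ := by
    have h1 : ∀ ε ∈ {ε : ℝ | 0 ≤ ε ∧ (epsCore n v ε).Nonempty},
        leastDeficit n vh ≤ ε + δ := by
      rintro ε ⟨hε0, u, hu⟩
      exact csInf_le hbddvh ⟨by linarith, u, epsCore_cross n v vh hδle hu⟩
    have h2 : leastDeficit n vh - δ ≤ leastDeficit n v :=
      le_csInf hnev fun ε hε => by linarith [h1 ε hε]
    linarith
  constructor
  · intro u hu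
    exact epsCore_cross n vh v hδle' hu
  · exact epsCore_mono n v (by linarith)
end

section
/- Let v, v̂ : 2^N → {0,1} be binary value functions with v(N) = v̂(N) = 1 and v(∅) = v̂(∅) = 0, and let ε*, ε̂ denote their respective least core deficits. Then |ε* − ε̂| ≤ max over balanced distributions λ of Σ_{S : v(S) ≠ v̂(S)} λ_S, i.e., the sensitivity of the least core deficit is bounded by the worst-case disagreement probability under a balanced distribution over coalitions. -/
open Finset

/-- A balanced probability distribution over coalitions: all players have the
same marginal inclusion probability. -/
def IsBalanced (n : ℕ) (lam : Finset (Fin n) → ℝ) : Prop :=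
  (∀ S, 0 ≤ lam S) ∧ (∑ S : Finset (Fin n), lam S) = 1 ∧
  ∀ i j : Fin n,
    (∑ S ∈ Finset.univ.filter (fun S : Finset (Fin n) => i ∈ S), lam S) =
    (∑ S ∈ Finset.univ.filter (fun S : Finset (Fin n) => j ∈ S), lam S)

section helpers

variable {n : ℕ} {v vh w : Finset (Fin n) → ℝ}

lemma npos (hwN : w Finset.univ = 1) (hw0 : w ∅ = 0) : 0 < n := by
  rcases Nat.eq_zero_or_pos n with h | h
  · subst h
    have : (Finset.univ : Finset (Fin 0)) = ∅ := rfl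
    rw [this, hw0] at hwN; norm_num at hwN
  · exact h

lemma uniform_mem (hn : 0 < n) (hwbin : ∀ S, w S = 0 ∨ w S = 1) {c : ℝ} (hc : 1 ≤ c) :
    (fun _ => (n : ℝ)⁻¹) ∈ epsCore n w c := by
  have hnR : (0:ℝ) < n := by exact_mod_cast hn
  refine ⟨fun i => ⟨by positivity, inv_le_one_of_one_le₀ (by exact_mod_cast hn)⟩, ?_, ?_⟩
  · simp [Finset.card_univ, mul_comm]
    field_simp
  · intro S
    have h1 : w S ≤ 1 := by rcases hwbin S with h | h <;> simp [h]
    have h2 : (0:ℝ) ≤ ∑ i ∈ S, (n:ℝ)⁻¹ := Finset.sum_nonneg fun _ _ => by positivity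
    linarith

lemma Tset_nonempty (hn : 0 < n) (hwbin : ∀ S, w S = 0 ∨ w S = 1) :
    {ε : ℝ | 0 ≤ ε ∧ (epsCore n w ε).Nonempty}.Nonempty :=
  ⟨1, by norm_num, ⟨_, uniform_mem hn hwbin le_rfl⟩⟩

lemma Tset_bddBelow : BddBelow {ε : ℝ | 0 ≤ ε ∧ (epsCore n w ε).Nonempty} :=
  ⟨0, fun _ hx => hx.1⟩

lemma leastDeficit_nonneg (hn : 0 < n) (hwbin : ∀ S, w S = 0 ∨ w S = 1) :
    0 ≤ leastDeficit n w :=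
  le_csInf (Tset_nonempty hn hwbin) fun _ hx => hx.1

lemma leastDeficit_le {c : ℝ} (hc : 0 ≤ c) (h : (epsCore n w c).Nonempty) :
    leastDeficit n w ≤ c :=
  csInf_le Tset_bddBelow ⟨hc, h⟩

lemma epsCore_mono_s3 {c c' : ℝ} (h : c ≤ c') : epsCore n w c ⊆ epsCore n w c' := by
  rintro u ⟨h1, h2, h3⟩
  exact ⟨h1, h2, fun S => le_trans (by linarith [h3 S]) (h3 S)⟩

lemma exists_approx (hn : 0 < n) (hwbin : ∀ S, w S = 0 ∨ w S = 1) {δ : ℝ} (hδ : 0 < δ) :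
    (epsCore n w (leastDeficit n w + δ)).Nonempty := by
  have h := exists_lt_of_csInf_lt (Tset_nonempty hn hwbin)
    (show leastDeficit n w < leastDeficit n w + δ by linarith)
  obtain ⟨x, ⟨hx0, u, hu⟩, hxlt⟩ := h
  exact ⟨u, epsCore_mono_s3 (le_of_lt hxlt) hu⟩

end helpers

section sets

variable {n : ℕ} (v vh : Finset (Fin n) → ℝ)

noncomputable def MSet : Set ℝ :=
  {x : ℝ | ∃ lam : Finset (Fin n) → ℝ, IsBalanced n lam ∧
    x = ∑ S : Finset (Fin n), if v S ≠ vh S then lam S else 0}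

lemma balancedUnivDist : IsBalanced n (fun S : Finset (Fin n) => if S = Finset.univ then (1:ℝ) else 0) := by
  refine ⟨fun S => by positivity, by simp, fun i j => ?_⟩
  rw [Finset.sum_filter, Finset.sum_filter]
  congr 1
  ext S
  by_cases hS : S = Finset.univ <;> simp [hS]

lemma MSet_bddAbove : BddAbove (MSet v vh) := by
  refine ⟨1, fun x hx => ?_⟩
  obtain ⟨lam, ⟨hpos, hsum, _⟩, rfl⟩ := hx
  calc ∑ S : Finset (Fin n), (if v S ≠ vh S then lam S else 0)
      ≤ ∑ S : Finset (Fin n), lam S := by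
        apply Finset.sum_le_sum
        intro S _
        by_cases h : v S ≠ vh S <;> simp [h, hpos S]
    _ = 1 := hsum

lemma zero_mem_MSet (hvN : v Finset.univ = 1) (hvhN : vh Finset.univ = 1) :
    (0:ℝ) ∈ MSet v vh := by
  refine ⟨_, balancedUnivDist, ?_⟩
  rw [eq_comm, Finset.sum_eq_zero]
  intro S _
  by_cases hS : S = Finset.univ
  · subst hS; simp [hvN, hvhN]
  · simp [hS]

end sets

section cert
variable {n : ℕ} (v vh : Finset (Fin n) → ℝ)

noncomputable def aVec (n : ℕ) (S : Finset (Fin n)) : Fin n → ℝ :=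
  fun i => (if i ∈ S then (1:ℝ) else 0) - (S.card : ℝ) / n

noncomputable def cVal (S : Finset (Fin n)) : ℝ := if v S ≠ vh S then 1 else 0

noncomputable def pPt (S : Finset (Fin n)) : (Fin n → ℝ) × ℝ := (aVec n S, cVal v vh S)

noncomputable def Tmap : (Finset (Fin n) → ℝ) →ₗ[ℝ] (Fin n → ℝ) × ℝ where
  toFun lam := ∑ S : Finset (Fin n), lam S • pPt v vh S
  map_add' x y := by simp [add_smul, Finset.sum_add_distrib]
  map_smul' c x := by simp [Finset.smul_sum, mul_smul]

lemma pPt_mem_image (S0 : Finset (Fin n)) :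
    pPt v vh S0 ∈ (Tmap v vh) '' stdSimplex ℝ (Finset (Fin n)) := by
  refine ⟨fun S => if S = S0 then (1:ℝ) else 0, ⟨fun S => by positivity, by simp⟩, ?_⟩
  simp [Tmap, ite_smul]

end cert

lemma disjoint_KM {δ : ℝ} (hδ : 0 < δ) :
    Disjoint ((Tmap v vh) '' stdSimplex ℝ (Finset (Fin n)) : Set ((Fin n → ℝ) × ℝ))
      ((({(0 : Fin n → ℝ)} : Set (Fin n → ℝ)) ×ˢ Set.Ici (sSup (MSet v vh) + δ) :
        Set ((Fin n → ℝ) × ℝ))) := by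
  rw [Set.disjoint_left]
  rintro x ⟨lam, ⟨hpos, hsum⟩, rfl⟩ hxM
  obtain ⟨hx1, hx2⟩ := hxM
  simp only [Set.mem_singleton_iff] at hx1
  -- first coordinate of Tmap lam
  have hfst : ∀ i : Fin n, (∑ S : Finset (Fin n), lam S * aVec n S i) = 0 := by
    intro i
    have : ((Tmap v vh) lam).1 i = 0 := by rw [hx1]; rfl
    rw [show ((Tmap v vh) lam).1 = ∑ S : Finset (Fin n), lam S • aVec n S by
      simp [Tmap, pPt, Prod.fst_sum]] at this
    simpa using this
  have hmarg : ∀ i : Fin n,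
      (∑ S ∈ Finset.univ.filter (fun S : Finset (Fin n) => i ∈ S), lam S)
        = ∑ S : Finset (Fin n), lam S * ((S.card : ℝ) / n) := by
    intro i
    have h := hfst i
    rw [Finset.sum_filter]
    have : ∀ S : Finset (Fin n), lam S * aVec n S i
        = (if i ∈ S then lam S else 0) - lam S * ((S.card : ℝ) / n) := by
      intro S
      by_cases h : i ∈ S <;> simp [aVec, h, mul_sub]
    rw [Finset.sum_congr rfl (fun S _ => this S), Finset.sum_sub_distrib] at h
    linarith
  have hbal : IsBalanced n lam :=
    ⟨hpos, hsum, fun i j => by rw [hmarg i, hmarg j]⟩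
  -- second coordinate
  have hsnd : ((Tmap v vh) lam).2 = ∑ S : Finset (Fin n), if v S ≠ vh S then lam S else 0 := by
    rw [show ((Tmap v vh) lam).2 = ∑ S : Finset (Fin n), lam S * cVal v vh S by
      simp [Tmap, pPt, Prod.snd_sum]]
    refine Finset.sum_congr rfl fun S _ => ?_
    by_cases h : v S = vh S <;> simp [cVal, h]
  have hmem : ((Tmap v vh) lam).2 ∈ MSet v vh := ⟨lam, hbal, hsnd⟩
  have hle : ((Tmap v vh) lam).2 ≤ sSup (MSet v vh) := by
    apply le_csSup ?_ hmem
    refine ⟨1, fun x hx => ?_⟩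
    obtain ⟨lam', ⟨hpos', hsum', _⟩, rfl⟩ := hx
    calc ∑ S : Finset (Fin n), (if v S ≠ vh S then lam' S else 0)
        ≤ ∑ S : Finset (Fin n), lam' S := by
          apply Finset.sum_le_sum
          intro S _
          by_cases h : v S ≠ vh S <;> simp [h, hpos' S]
      _ = 1 := hsum'
  simp only [Set.mem_Ici] at hx2
  linarith

lemma exists_certificate (hn : 0 < n) (hv0 : v ∅ = 0) (hvh0 : vh ∅ = 0)
    {δ : ℝ} (hδ : 0 < δ) :
    ∃ y : Fin n → ℝ, (∑ i, y i) = 0 ∧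
      ∀ S : Finset (Fin n),
        (if v S ≠ vh S then (1:ℝ) else 0) ≤ (sSup (MSet v vh) + δ) + ∑ i ∈ S, y i := by
  classical
  set d := sSup (MSet v vh) + δ with hd
  set K : Set ((Fin n → ℝ) × ℝ) := (Tmap v vh) '' stdSimplex ℝ (Finset (Fin n)) with hK
  set Mt : Set ((Fin n → ℝ) × ℝ) :=
    (({(0 : Fin n → ℝ)} : Set (Fin n → ℝ)) ×ˢ Set.Ici d) with hMt
  have hKconv : Convex ℝ K := (convex_stdSimplex ℝ _).linear_image (Tmap v vh)
  have hKcomp : IsCompact K :=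
    (isCompact_stdSimplex ℝ _).image (Tmap v vh).continuous_of_finiteDimensional
  have hMconv : Convex ℝ Mt := (convex_singleton _).prod (convex_Ici _)
  have hMclosed : IsClosed Mt := isClosed_singleton.prod isClosed_Ici
  have hdisj : Disjoint K Mt := disjoint_KM hδ
  obtain ⟨f, u, vv, hfK, huv, hfM⟩ :=
    geometric_hahn_banach_compact_closed hKconv hKcomp hMconv hMclosed hdisj
  set t₀ : ℝ := f ((0 : Fin n → ℝ), (1:ℝ)) with ht₀def
  set g : (Fin n → ℝ) →ₗ[ℝ] ℝ :=
    (f : ((Fin n → ℝ) × ℝ) →ₗ[ℝ] ℝ).comp (LinearMap.inl ℝ (Fin n → ℝ) ℝ) with hgdef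
  have hdecomp : ∀ (w : Fin n → ℝ) (e : ℝ), f (w, e) = g w + e * t₀ := by
    intro w e
    have h1 : (w, e) = (w, (0:ℝ)) + e • ((0 : Fin n → ℝ), (1:ℝ)) := by
      simp [Prod.ext_iff]
    rw [h1, map_add, map_smul, smul_eq_mul]
    rfl
  have hMpt : ∀ e : ℝ, d ≤ e → vv < e * t₀ := by
    intro e he
    have : ((0 : Fin n → ℝ), e) ∈ Mt := by
      refine Set.mem_prod.2 ⟨rfl, he⟩
    have h2 := hfM _ this
    rwa [hdecomp, map_zero, zero_add] at h2
  have ht₀ : 0 < t₀ := by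
    rcases lt_trichotomy t₀ 0 with h | h | h
    · exfalso
      have he : d ≤ max d ((vv - 1)/t₀) := le_max_left _ _
      have h1 := hMpt _ he
      have h2 : (vv - 1)/t₀ ≤ max d ((vv - 1)/t₀) := le_max_right _ _
      have h3 : (max d ((vv - 1)/t₀)) * t₀ ≤ vv - 1 := by
        rw [div_le_iff_of_neg h] at h2
        linarith [h2]
      linarith
    · exfalso
      have h1 := hMpt d le_rfl
      rw [h, mul_zero] at h1
      have h0 : (0:ℝ) < u := by
        have := hfK _ (pPt_mem_image v vh ∅)
        have hp : pPt v vh ∅ = 0 := by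
          unfold pPt
          rw [Prod.mk_eq_zero]
          refine ⟨funext fun i => ?_, by simp [cVal, hv0, hvh0]⟩
          simp [aVec]
        rw [hp, map_zero] at this
        linarith
      linarith
    · exact h
  have hvvd : vv < d * t₀ := hMpt d le_rfl
  -- for every S, f (pPt S) < u < vv < d * t₀
  have hS : ∀ S : Finset (Fin n), g (aVec n S) + cVal v vh S * t₀ < d * t₀ := by
    intro S
    have := hfK _ (pPt_mem_image v vh S)
    rw [show f (pPt v vh S) = g (aVec n S) + cVal v vh S * t₀ from hdecomp _ _] at this
    linarith
  -- expand g (aVec S)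
  set b : Fin n → ℝ := fun i => g (fun j => if i = j then (1:ℝ) else 0) with hb
  set B : ℝ := ∑ i, b i with hB
  have hga : ∀ S : Finset (Fin n),
      g (aVec n S) = (∑ i ∈ S, b i) - ((S.card : ℝ)/n) * B := by
    intro S
    rw [LinearMap.pi_apply_eq_sum_univ g (aVec n S)]
    have h2 : ∀ i : Fin n, aVec n S i • g (fun j => if i = j then (1:ℝ) else 0)
        = (if i ∈ S then b i else 0) - ((S.card : ℝ)/n) * b i := by
      intro i
      by_cases h : i ∈ S <;> simp [aVec, h, sub_mul, b]
    rw [Finset.sum_congr rfl (fun i _ => h2 i), Finset.sum_sub_distrib]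
    congr 1
    · rw [Finset.sum_ite_mem, Finset.univ_inter]
    · rw [← Finset.mul_sum, ← hB]
  refine ⟨fun i => (B/n - b i)/t₀, ?_, ?_⟩
  · rw [← Finset.sum_div, Finset.sum_sub_distrib]
    simp only [Finset.sum_const, Finset.card_univ, Fintype.card_fin, nsmul_eq_mul]
    rw [mul_div_cancel₀ _ (by exact_mod_cast hn.ne' : (n:ℝ) ≠ 0), ← hB, sub_self, zero_div]
  · intro S
    have h1 := hS S
    rw [hga S] at h1
    have hsum : ∑ i ∈ S, (B/n - b i)/t₀ = ((S.card : ℝ) * (B/n) - ∑ i ∈ S, b i)/t₀ := by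
      rw [← Finset.sum_div, Finset.sum_sub_distrib]
      simp [mul_comm]
    have key : cVal v vh S * t₀ ≤ d * t₀ + ((S.card : ℝ)*(B/n) - ∑ i ∈ S, b i) := by
      have hrr : ((S.card : ℝ)/n) * B = (S.card : ℝ) * (B/n) := by ring
      nlinarith [h1]
    have hfin : cVal v vh S ≤ d + ((S.card : ℝ)*(B/n) - ∑ i ∈ S, b i)/t₀ := by
      rw [← sub_le_iff_le_add', le_div_iff₀ ht₀]
      have expand : (cVal v vh S - d)*t₀ = cVal v vh S * t₀ - d * t₀ := by ring
      rw [expand]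
      linarith
    rw [hsum]
    exact hfin


section main
variable {n : ℕ}

theorem main_le (v vh : Finset (Fin n) → ℝ) (Dv : ℝ)
    (hvbin : ∀ S, v S = 0 ∨ v S = 1) (hvhbin : ∀ S, vh S = 0 ∨ vh S = 1)
    (hn : 0 < n)
    (cert : ∀ δ : ℝ, 0 < δ → ∃ y : Fin n → ℝ, (∑ i, y i) = 0 ∧
      ∀ S : Finset (Fin n),
        (if v S ≠ vh S then (1:ℝ) else 0) ≤ (Dv + δ) + ∑ i ∈ S, y i)
    (hD0 : 0 ≤ Dv) :
    leastDeficit n v ≤ leastDeficit n vh + Dv := by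
  have hε'0 : 0 ≤ leastDeficit n vh := leastDeficit_nonneg hn hvhbin
  set ε' := leastDeficit n vh with hεdef
  have hkey : ∀ δ : ℝ, 0 < δ → leastDeficit n v ≤ ε' + Dv + 2*δ := by
    intro δ hδ
    obtain ⟨y, hy0, hyS⟩ := cert δ hδ
    obtain ⟨uu, hub, husum, hucon⟩ := exists_approx hn hvhbin hδ (w := vh)
    rw [← hεdef] at hucon
    set α := Dv + δ with hαdef
    have hα0 : 0 ≤ α := by linarith
    set L := ε' + δ + α with hLdef
    have hL0 : 0 ≤ L := by rw [hLdef]; linarith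
    have hLgoal : ε' + Dv + 2*δ = L := by rw [hLdef, hαdef]; ring
    rw [hLgoal]
    by_cases hL1 : 1 ≤ L
    · exact leastDeficit_le hL0 ⟨_, uniform_mem hn hvbin hL1⟩
    push_neg at hL1
    have hα1 : α < 1 := by rw [hLdef] at hL1; linarith
    set s := ∑ i, max (y i) 0 with hsdef
    have hs0 : 0 ≤ s := Finset.sum_nonneg fun i _ => le_max_right _ _
    clear_value ε' α L s
    have hsα : s ≤ α := by
      set Sneg := Finset.univ.filter (fun i : Fin n => y i < 0) with hSneg
      have h1 : s = ∑ i ∈ Finset.univ.filter (fun i : Fin n => ¬ (y i < 0)), y i := by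
        rw [hsdef, ← Finset.sum_filter_add_sum_filter_not Finset.univ (fun i => y i < 0)]
        rw [Finset.sum_congr rfl (fun i hi => show max (y i) 0 = 0 by
          rw [max_eq_right]; exact le_of_lt (Finset.mem_filter.1 hi).2), Finset.sum_const_zero,
          zero_add]
        exact Finset.sum_congr rfl (fun i hi => by
          rw [max_eq_left]; exact not_lt.1 (Finset.mem_filter.1 hi).2)
      have h2 : (∑ i ∈ Sneg, y i) + s = 0 := by
        rw [h1, hSneg, Finset.sum_filter_add_sum_filter_not, hy0]
      have h3 := hyS Sneg
      have h4 : (0:ℝ) ≤ if v Sneg ≠ vh Sneg then (1:ℝ) else 0 := by positivity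
      linarith
    rcases eq_or_lt_of_le hs0 with hs | hs
    · -- s = 0 ⇒ y = 0 ⇒ no disagreement
      have hy_nonpos : ∀ i ∈ Finset.univ, y i ≤ (0:ℝ) := by
        intro i _
        by_contra h
        push_neg at h
        have : 0 < s := by
          rw [hsdef]
          apply Finset.sum_pos' (fun j _ => le_max_right _ _)
          exact ⟨i, Finset.mem_univ i, by rw [max_eq_left h.le]; exact h⟩
        linarith
      have hyzero : ∀ i ∈ Finset.univ, y i = (0:ℝ) :=
        (Finset.sum_eq_zero_iff_of_nonpos hy_nonpos).1 hy0
      have hagree : ∀ S, v S = vh S := by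
        intro S
        by_contra h
        have h3 := hyS S
        rw [if_pos h] at h3
        rw [Finset.sum_congr rfl (fun i _ => hyzero i (Finset.mem_univ i)),
          Finset.sum_const_zero, add_zero] at h3
        linarith
      refine leastDeficit_le hL0 ⟨uu, hub, husum, fun S => ?_⟩
      have hcon2 : v S - (ε' + δ) ≤ ∑ i ∈ S, uu i := by
        rw [hagree S]; exact hucon S
      have hLα : v S - L = v S - (ε' + δ) - α := by rw [hLdef]; ring
      linarith
    · -- s > 0
      set u' : Fin n → ℝ := fun i => (1-α) * uu i + α * (max (y i) 0 / s) with hu'def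
      have hu'nonneg : ∀ i, 0 ≤ u' i := by
        intro i
        have h1 := (hub i).1
        have h2 : (0:ℝ) ≤ max (y i) 0 / s := div_nonneg (le_max_right _ _) hs0
        have h3 : (0:ℝ) ≤ 1 - α := by linarith
        have := add_nonneg (mul_nonneg h3 h1) (mul_nonneg hα0 h2)
        exact this
      have hu'sum : ∑ i, u' i = 1 := by
        rw [hu'def]
        rw [Finset.sum_add_distrib, ← Finset.mul_sum, ← Finset.mul_sum, husum,
          ← Finset.sum_div, ← hsdef, div_self hs.ne', mul_one, mul_one]
        ring
      have hu'le : ∀ i, u' i ≤ 1 := by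
        intro i
        calc u' i ≤ ∑ j, u' j :=
          Finset.single_le_sum (fun j _ => hu'nonneg j) (Finset.mem_univ i)
        _ = 1 := hu'sum
      refine leastDeficit_le hL0 ⟨u', fun i => ⟨hu'nonneg i, hu'le i⟩, hu'sum, fun S => ?_⟩
      have hsplit : ∑ i ∈ S, u' i
          = (1-α) * (∑ i ∈ S, uu i) + α * ((∑ i ∈ S, max (y i) 0) / s) := by
        rw [hu'def, Finset.sum_add_distrib, ← Finset.mul_sum, ← Finset.mul_sum,
          ← Finset.sum_div]
      have hU1 : ∑ i ∈ S, uu i ≤ 1 := by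
        rw [← husum]
        exact Finset.sum_le_sum_of_subset_of_nonneg (Finset.subset_univ S)
          (fun i _ _ => (hub i).1)
      have hU0 : 0 ≤ ∑ i ∈ S, uu i := Finset.sum_nonneg fun i _ => (hub i).1
      have hmax0 : 0 ≤ ∑ i ∈ S, max (y i) 0 := Finset.sum_nonneg fun i _ => le_max_right _ _
      by_cases hvS : v S = vh S
      · -- agreement
        have hcon : v S - (ε' + δ) ≤ ∑ i ∈ S, uu i := by
          rw [hvS]; exact hucon S
        have h6 : α * (∑ i ∈ S, uu i) ≤ α * 1 :=
          mul_le_mul_of_nonneg_left hU1 hα0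
        have h7 : 0 ≤ α * ((∑ i ∈ S, max (y i) 0) / s) :=
          mul_nonneg hα0 (div_nonneg hmax0 hs0)
        rw [hsplit]
        have hLα : v S - L = v S - (ε' + δ) - α := by rw [hLdef]; ring
        nlinarith
      · -- disagreement
        have h3 := hyS S
        rw [if_pos hvS] at h3
        have hymax : ∑ i ∈ S, y i ≤ ∑ i ∈ S, max (y i) 0 :=
          Finset.sum_le_sum fun i _ => le_max_left _ _
        have h8 : 1 - α ≤ ∑ i ∈ S, max (y i) 0 := by linarith
        have h9 : (1 - α) ≤ α * ((∑ i ∈ S, max (y i) 0) / s) := by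
          have hA : (1-α) ≤ (α*(1-α))/s := by
            rw [le_div_iff₀ hs]
            nlinarith
          have hB : (α*(1-α))/s ≤ α * ((∑ i ∈ S, max (y i) 0) / s) := by
            rw [mul_div_assoc]
            gcongr
          linarith
        have h10 : 0 ≤ (1-α) * (∑ i ∈ S, uu i) :=
          mul_nonneg (by linarith) hU0
        have hv1 : v S ≤ 1 := by rcases hvbin S with h | h <;> simp [h]
        rw [hsplit]
        have hLα : v S - L ≤ 1 - α := by rw [hLdef]; linarith
        linarith
  by_contra hcon
  push_neg at hcon
  have hδpos : 0 < (leastDeficit n v - (ε' + Dv))/3 := by linarith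
  have := hkey _ hδpos
  linarith
end main


lemma MSet_comm {n : ℕ} (v vh : Finset (Fin n) → ℝ) : MSet vh v = MSet v vh := by
  unfold MSet
  ext x
  constructor <;> rintro ⟨lam, hb, rfl⟩
  · exact ⟨lam, hb, Finset.sum_congr rfl fun S _ => if_congr ne_comm rfl rfl⟩
  · exact ⟨lam, hb, Finset.sum_congr rfl fun S _ => if_congr ne_comm rfl rfl⟩

/-- Corollary 3.3: for binary value functions, the sensitivity of the least core
deficit is bounded by the worst-case disagreement probability under a balanced
distribution over coalitions. -/
theorem stmt3 (n : ℕ) (v vh : Finset (Fin n) → ℝ)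
    (hvbin : ∀ S, v S = 0 ∨ v S = 1) (hvhbin : ∀ S, vh S = 0 ∨ vh S = 1)
    (hvN : v Finset.univ = 1) (hvhN : vh Finset.univ = 1)
    (hv0 : v ∅ = 0) (hvh0 : vh ∅ = 0) :
    |leastDeficit n v - leastDeficit n vh| ≤
      sSup {x : ℝ | ∃ lam : Finset (Fin n) → ℝ, IsBalanced n lam ∧
        x = ∑ S : Finset (Fin n), if v S ≠ vh S then lam S else 0} := by
  have hn : 0 < n := npos hvN hv0
  have hD0 : 0 ≤ sSup (MSet v vh) :=
    le_csSup (MSet_bddAbove v vh) (zero_mem_MSet v vh hvN hvhN)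
  have h1 : leastDeficit n v ≤ leastDeficit n vh + sSup (MSet v vh) :=
    main_le v vh _ hvbin hvhbin hn
      (fun δ hδ => exists_certificate (v := v) (vh := vh) hn hv0 hvh0 hδ) hD0
  have h2 : leastDeficit n vh ≤ leastDeficit n v + sSup (MSet v vh) := by
    have := main_le vh v (sSup (MSet vh v)) hvhbin hvbin hn
      (fun δ hδ => exists_certificate (v := vh) (vh := v) hn hvh0 hv0 hδ)
      (by rw [MSet_comm]; exact hD0)
    rwa [MSet_comm v vh] at this
  have hEq : sSup {x : ℝ | ∃ lam : Finset (Fin n) → ℝ, IsBalanced n lam ∧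
      x = ∑ S : Finset (Fin n), if v S ≠ vh S then lam S else 0} = sSup (MSet v vh) := rfl
  rw [abs_sub_le_iff, hEq]
  constructor <;> linarith
end

section
/- Let v : 2^N → [0,1] be supermodular (v(S) + v(T) ≤ v(S∪T) + v(S∩T) for all S,T ⊆ N) with v(N) = 1 and v(∅) = 0. Let v̂ : 2^N → [0,1] satisfy v̂(N) = 1, v̂(∅) = 0. With S_i = {1,…,i}, define û_i = v̂(S_i) − v̂(S_{i−1}) for i = 1,…,n, and let TV(v,v̂) = (1/2) Σ_{i=1}^n |v(S_i) − v̂(S_i)|. Then û lies in the 4·TV(v,v̂)-core of v: Σ_{i∈N} û_i = 1, and for every T ⊆ N, Σ_{j∈T} û_j ≥ v(T) − 4·TV(v,v̂). -/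
open Finset

/-- The chain coalition `S_k = {players with index < k}` (0-indexed players). -/
def chain (n k : ℕ) : Finset (Fin n) := Finset.univ.filter (fun j : Fin n => (j : ℕ) < k)

/-- Proposition B.1: for supermodular `v`, the marginal allocation of `v̂` along
the chain lies in the `4·TV(v,v̂)`-core of `v`. -/
theorem stmt4 (n : ℕ) (v vh : Finset (Fin n) → ℝ)
    (hv01 : ∀ S, v S ∈ Set.Icc (0:ℝ) 1) (hvh01 : ∀ S, vh S ∈ Set.Icc (0:ℝ) 1)
    (hvN : v Finset.univ = 1) (hv0 : v ∅ = 0)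
    (hvhN : vh Finset.univ = 1) (hvh0 : vh ∅ = 0)
    (hsuper : ∀ S T : Finset (Fin n), v S + v T ≤ v (S ∪ T) + v (S ∩ T))
    (u : Fin n → ℝ)
    (hu : ∀ i : Fin n, u i = vh (chain n ((i : ℕ) + 1)) - vh (chain n (i : ℕ)))
    (TV : ℝ)
    (hTV : TV = (1 / 2) * ∑ i : Fin n, |v (chain n ((i : ℕ) + 1)) - vh (chain n ((i : ℕ) + 1))|) :
    (∑ i, u i) = 1 ∧
    ∀ T : Finset (Fin n), v T - 4 * TV ≤ ∑ j ∈ T, u j := by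
  have hchain0 : chain n 0 = ∅ := by ext j; simp [chain]
  have hchainN : chain n n = Finset.univ := by ext j; simp [chain, j.isLt]
  have tele : ∀ f : ℕ → ℝ, ∑ i : Fin n, (f ((i:ℕ)+1) - f (i:ℕ)) = f n - f 0 := by
    intro f
    rw [Fin.sum_univ_eq_sum_range (fun k => f (k+1) - f k)]
    exact Finset.sum_range_sub f n
  have hsum : (∑ i, u i) = 1 := by
    have h1 : ∑ i, u i = ∑ i : Fin n, (vh (chain n ((i:ℕ)+1)) - vh (chain n (i:ℕ))) :=
      Finset.sum_congr rfl (fun i _ => hu i)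
    have h2 : ∑ i : Fin n, (vh (chain n ((i:ℕ)+1)) - vh (chain n (i:ℕ)))
        = vh (chain n n) - vh (chain n 0) := tele (fun k => vh (chain n k))
    rw [h1, h2, hchain0, hchainN, hvhN, hvh0]
    ring
  refine ⟨hsum, ?_⟩
  intro T
  set D : ℕ → ℝ := fun k => v (chain n k) - vh (chain n k) with hD
  have hD0 : D 0 = 0 := by simp [hD, hchain0, hv0, hvh0]
  -- core inequality for exact marginals
  have hm : v T ≤ ∑ j ∈ T, (v (chain n ((j:ℕ)+1)) - v (chain n (j:ℕ))) := by
    have htel : ∑ j : Fin n, (v (T ∩ chain n ((j:ℕ)+1)) - v (T ∩ chain n (j:ℕ))) = v T := by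
      have h2 : ∑ j : Fin n, (v (T ∩ chain n ((j:ℕ)+1)) - v (T ∩ chain n (j:ℕ)))
          = v (T ∩ chain n n) - v (T ∩ chain n 0) := tele (fun k => v (T ∩ chain n k))
      rw [h2, hchain0, hchainN, Finset.inter_univ, Finset.inter_empty, hv0]
      ring
    have hle : ∀ j : Fin n,
        v (T ∩ chain n ((j:ℕ)+1)) - v (T ∩ chain n (j:ℕ)) ≤
          (if j ∈ T then v (chain n ((j:ℕ)+1)) - v (chain n (j:ℕ)) else 0) := by
      intro j
      by_cases hj : j ∈ T
      · have h1 : chain n (j:ℕ) ∪ (T ∩ chain n ((j:ℕ)+1)) = chain n ((j:ℕ)+1) := by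
          ext x
          simp only [chain, Finset.mem_union, Finset.mem_inter, Finset.mem_filter,
            Finset.mem_univ, true_and, Nat.lt_succ_iff_lt_or_eq]
          constructor
          · rintro (h | ⟨_, h⟩)
            · exact Or.inl h
            · exact h
          · rintro (h | h)
            · exact Or.inl h
            · refine Or.inr ⟨?_, Or.inr h⟩
              have : x = j := Fin.ext h
              rw [this]; exact hj
        have h2 : chain n (j:ℕ) ∩ (T ∩ chain n ((j:ℕ)+1)) = T ∩ chain n (j:ℕ) := by
          ext x
          simp only [chain, Finset.mem_inter, Finset.mem_filter, Finset.mem_univ, true_and,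
            Nat.lt_succ_iff_lt_or_eq]
          constructor
          · rintro ⟨h, hT, _⟩; exact ⟨hT, h⟩
          · rintro ⟨hT, h⟩; exact ⟨h, hT, Or.inl h⟩
        have := hsuper (chain n (j:ℕ)) (T ∩ chain n ((j:ℕ)+1))
        rw [h1, h2] at this
        simp only [hj, if_true]
        linarith
      · have heq : T ∩ chain n ((j:ℕ)+1) = T ∩ chain n (j:ℕ) := by
          ext x
          simp only [chain, Finset.mem_inter, Finset.mem_filter, Finset.mem_univ, true_and,
            Nat.lt_succ_iff_lt_or_eq]
          constructor
          · rintro ⟨hT, h | h⟩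
            · exact ⟨hT, h⟩
            · exact absurd hT (by rwa [Fin.ext h])
          · rintro ⟨hT, h⟩; exact ⟨hT, Or.inl h⟩
        simp [hj, heq]
    calc v T = ∑ j : Fin n, (v (T ∩ chain n ((j:ℕ)+1)) - v (T ∩ chain n (j:ℕ))) := htel.symm
      _ ≤ ∑ j : Fin n, (if j ∈ T then v (chain n ((j:ℕ)+1)) - v (chain n (j:ℕ)) else 0) :=
          Finset.sum_le_sum (fun j _ => hle j)
      _ = ∑ j ∈ T, (v (chain n ((j:ℕ)+1)) - v (chain n (j:ℕ))) := by
          rw [Finset.sum_ite_mem, Finset.univ_inter]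
  -- rewrite u in terms of marginals and D
  have hu' : ∀ j : Fin n, u j = (v (chain n ((j:ℕ)+1)) - v (chain n (j:ℕ))) + D (j:ℕ) - D ((j:ℕ)+1) := by
    intro j; rw [hu j]; simp only [hD]; ring
  have hB : ∑ j : Fin n, |D ((j:ℕ)+1)| = 2 * TV := by
    rw [hTV]; simp only [hD]; ring
  have hA : ∑ j : Fin n, |D (j:ℕ)| ≤ 2 * TV := by
    rw [← hB]
    rw [Fin.sum_univ_eq_sum_range (fun k => |D k|), Fin.sum_univ_eq_sum_range (fun k => |D (k+1)|)]
    have h1 : ∑ k ∈ Finset.range n, |D k| ≤ ∑ k ∈ Finset.range (n+1), |D k| :=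
      Finset.sum_le_sum_of_subset_of_nonneg (Finset.range_subset_range.mpr (Nat.le_succ n))
        (fun k _ _ => abs_nonneg _)
    have h2 : ∑ k ∈ Finset.range (n+1), |D k| = ∑ k ∈ Finset.range n, |D (k+1)| + |D 0| :=
      Finset.sum_range_succ' _ n
    rw [hD0] at h2
    simp at h2
    linarith
  have hbound : ∑ j ∈ T, (D (j:ℕ) - D ((j:ℕ)+1)) ≥ -(4 * TV) := by
    have h1 : ∀ j ∈ T, -(|D (j:ℕ)| + |D ((j:ℕ)+1)|) ≤ D (j:ℕ) - D ((j:ℕ)+1) := by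
      intro j _
      have := abs_nonneg (D (j:ℕ))
      have h := neg_abs_le (D (j:ℕ))
      have h' := abs_le.mp (le_refl |D ((j:ℕ)+1)|) -- junk
      have := neg_abs_le (D (j:ℕ))
      have h2 : D ((j:ℕ)+1) ≤ |D ((j:ℕ)+1)| := le_abs_self _
      linarith [neg_abs_le (D (j:ℕ))]
    have h2 : ∑ j ∈ T, -(|D (j:ℕ)| + |D ((j:ℕ)+1)|) ≤ ∑ j ∈ T, (D (j:ℕ) - D ((j:ℕ)+1)) :=
      Finset.sum_le_sum h1
    have h3 : ∑ j ∈ T, (|D (j:ℕ)| + |D ((j:ℕ)+1)|) ≤ ∑ j : Fin n, (|D (j:ℕ)| + |D ((j:ℕ)+1)|) :=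
      Finset.sum_le_sum_of_subset_of_nonneg (Finset.subset_univ T)
        (fun j _ _ => by positivity)
    have h4 : ∑ j : Fin n, (|D (j:ℕ)| + |D ((j:ℕ)+1)|) ≤ 4 * TV := by
      rw [Finset.sum_add_distrib, hB]; linarith
    rw [Finset.sum_neg_distrib] at h2
    linarith
  have hfinal : ∑ j ∈ T, u j = ∑ j ∈ T, (v (chain n ((j:ℕ)+1)) - v (chain n (j:ℕ))) + ∑ j ∈ T, (D (j:ℕ) - D ((j:ℕ)+1)) := by
    rw [← Finset.sum_add_distrib]
    exact Finset.sum_congr rfl (fun j _ => by rw [hu' j]; ring)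
  rw [hfinal]
  linarith
end

section
/- Let v : 2^N → [0,1] be supermodular with v(N) = 1 and v(∅) = 0, S_i = {1,…,i}, and define u_i = v(S_i) − v(S_{i−1}). Then u lies in the core of v: Σ_{i∈N} u_i = 1 and for every T ⊆ N, Σ_{j∈T} u_j ≥ v(T). In particular, the core of a supermodular game is nonempty. -/
open Finset
/-- The core of a cooperative game: efficient allocations under-compensating no
coalition. -/
def coreSet (n : ℕ) (v : Finset (Fin n) → ℝ) : Set (Fin n → ℝ) :=
  {u | (∑ i, u i) = v Finset.univ ∧ ∀ T : Finset (Fin n), v T ≤ ∑ j ∈ T, u j}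

lemma chain_zero (n : ℕ) : chain n 0 = ∅ := by
  simp [chain]

lemma chain_top (n : ℕ) : chain n n = Finset.univ := by
  ext j; simp [chain, j.isLt]

lemma core_aux (n : ℕ) (v : Finset (Fin n) → ℝ)
    (hv0 : v ∅ = 0)
    (hsuper : ∀ S T : Finset (Fin n), v S + v T ≤ v (S ∪ T) + v (S ∩ T))
    (u : Fin n → ℝ)
    (hu : ∀ i : Fin n, u i = v (chain n ((i : ℕ) + 1)) - v (chain n (i : ℕ))) :
    ∀ k : ℕ, ∀ T : Finset (Fin n),
      v (T ∩ chain n k) ≤ ∑ j ∈ T.filter (fun j : Fin n => (j : ℕ) < k), u j := by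
  intro k
  induction k with
  | zero =>
    intro T
    simp [chain_zero, hv0]
  | succ k ih =>
    intro T
    by_cases h : ∃ i : Fin n, (i : ℕ) = k ∧ i ∈ T
    · obtain ⟨i, hik, hiT⟩ := h
      have hchain : chain n (k + 1) = insert i (chain n k) := by
        ext j
        simp only [chain, mem_filter, mem_univ, true_and, mem_insert]
        constructor
        · intro hj
          rcases Nat.lt_succ_iff_lt_or_eq.mp hj with h' | h'
          · exact Or.inr h'
          · exact Or.inl (Fin.ext (h'.trans hik.symm))
        · rintro (rfl | h')
          · omega
          · omega
      have hunion : chain n k ∪ (T ∩ chain n (k + 1)) = chain n (k + 1) := by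
        ext j
        simp only [chain, mem_union, mem_inter, mem_filter, mem_univ, true_and]
        constructor
        · rintro (h' | ⟨_, h'⟩) <;> omega
        · intro hj
          by_cases hjk : (j : ℕ) < k
          · exact Or.inl hjk
          · have : j = i := Fin.ext (by omega)
            exact Or.inr ⟨this ▸ hiT, hj⟩
      have hinter : chain n k ∩ (T ∩ chain n (k + 1)) = T ∩ chain n k := by
        ext j
        simp only [chain, mem_inter, mem_filter, mem_univ, true_and]
        constructor
        · rintro ⟨h1, h2, _⟩; exact ⟨h2, h1⟩
        · rintro ⟨h1, h2⟩; exact ⟨h2, h1, by omega⟩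
      have hfilter : T.filter (fun j : Fin n => (j : ℕ) < k + 1)
          = insert i (T.filter (fun j : Fin n => (j : ℕ) < k)) := by
        ext j
        simp only [mem_filter, mem_insert]
        constructor
        · rintro ⟨hjT, hj⟩
          rcases Nat.lt_succ_iff_lt_or_eq.mp hj with h' | h'
          · exact Or.inr ⟨hjT, h'⟩
          · exact Or.inl (Fin.ext (h'.trans hik.symm))
        · rintro (rfl | ⟨h1, h2⟩)
          · exact ⟨hiT, by omega⟩
          · exact ⟨h1, by omega⟩
      have hnotmem : i ∉ T.filter (fun j : Fin n => (j : ℕ) < k) := by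
        simp [hik]
      have hs := hsuper (chain n k) (T ∩ chain n (k + 1))
      rw [hunion, hinter] at hs
      have hui : u i = v (chain n (k + 1)) - v (chain n k) := by
        rw [hu i, hik]
      rw [hfilter, Finset.sum_insert hnotmem]
      calc v (T ∩ chain n (k + 1))
          ≤ v (chain n (k + 1)) + v (T ∩ chain n k) - v (chain n k) := by linarith
        _ = u i + v (T ∩ chain n k) := by rw [hui]; ring
        _ ≤ u i + ∑ j ∈ T.filter (fun j : Fin n => (j : ℕ) < k), u j := by linarith [ih T]
    · push_neg at h
      have h1 : T ∩ chain n (k + 1) = T ∩ chain n k := by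
        ext j
        simp only [chain, mem_inter, mem_filter, mem_univ, true_and]
        constructor
        · rintro ⟨hjT, hj⟩
          refine ⟨hjT, ?_⟩
          have := h j
          rcases Nat.lt_succ_iff_lt_or_eq.mp hj with h' | h'
          · exact h'
          · exact absurd hjT (this h')
        · rintro ⟨hjT, hj⟩; exact ⟨hjT, by omega⟩
      have h2 : T.filter (fun j : Fin n => (j : ℕ) < k + 1) = T.filter (fun j : Fin n => (j : ℕ) < k) := by
        ext j
        simp only [mem_filter]
        constructor
        · rintro ⟨hjT, hj⟩
          refine ⟨hjT, ?_⟩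
          rcases Nat.lt_succ_iff_lt_or_eq.mp hj with h' | h'
          · exact h'
          · exact absurd hjT (h j h')
        · rintro ⟨hjT, hj⟩; exact ⟨hjT, by omega⟩
      rw [h1, h2]
      exact ih T

/-- Shapley: a supermodular game has a nonempty core; the chain marginal
allocation lies in it. -/
theorem stmt5 (n : ℕ) (v : Finset (Fin n) → ℝ)
    (hv01 : ∀ S, v S ∈ Set.Icc (0:ℝ) 1)
    (hvN : v Finset.univ = 1) (hv0 : v ∅ = 0)
    (hsuper : ∀ S T : Finset (Fin n), v S + v T ≤ v (S ∪ T) + v (S ∩ T))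
    (u : Fin n → ℝ)
    (hu : ∀ i : Fin n, u i = v (chain n ((i : ℕ) + 1)) - v (chain n (i : ℕ))) :
    (∑ i, u i) = 1 ∧
    (∀ T : Finset (Fin n), v T ≤ ∑ j ∈ T, u j) ∧
    (coreSet n v).Nonempty := by
  have hsum : (∑ i, u i) = 1 := by
    have : (∑ i, u i) = ∑ i : Fin n, (fun m => v (chain n (m + 1)) - v (chain n m)) (i : ℕ) := by
      refine Finset.sum_congr rfl fun i _ => hu i
    rw [this, Fin.sum_univ_eq_sum_range (fun m => v (chain n (m + 1)) - v (chain n m)) n]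
    rw [Finset.sum_range_sub (fun i => v (chain n i)), chain_zero, chain_top, hvN, hv0]
    ring
  have hcore : ∀ T : Finset (Fin n), v T ≤ ∑ j ∈ T, u j := by
    intro T
    have := core_aux n v hv0 hsuper u hu n T
    rw [chain_top] at this
    simpa [Finset.filter_true_of_mem (fun (j : Fin n) _ => j.isLt)] using this
  exact ⟨hsum, hcore, ⟨u, hsum.trans hvN.symm, hcore⟩⟩
end

section
/- Let v : 2^N → [0,1] be supermodular with v(∅) = 0, and let S_i = {1,…,i} with marginal allocation u_i = v(S_i) − v(S_{i−1}). Then for every T ⊆ N and every i such that T ⊆ S_i and i ∈ T (i = max T with the natural ordering), we have v(T) ≤ u_i + v(T∖{i}). Consequently, by induction on |T|, Σ_{j∈T} u_j ≥ v(T) for all T ⊆ N. -/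
open Finset
/-- Key inductive step for supermodular games: if `i ∈ T ⊆ S_i`, then
`v(T) ≤ u_i + v(T \ {i})` for the chain marginals, and consequently
`Σ_{j∈T} u_j ≥ v(T)` for every coalition `T`. -/
theorem stmt19 (n : ℕ) (v : Finset (Fin n) → ℝ)
    (h01 : ∀ S, v S ∈ Set.Icc (0:ℝ) 1) (h0 : v ∅ = 0)
    (hsuper : ∀ S T : Finset (Fin n), v S + v T ≤ v (S ∪ T) + v (S ∩ T))
    (u : Fin n → ℝ)
    (hu : ∀ i : Fin n, u i = v (chain n ((i : ℕ) + 1)) - v (chain n (i : ℕ))) :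
    (∀ T : Finset (Fin n), ∀ i ∈ T, T ⊆ chain n ((i : ℕ) + 1) →
      v T ≤ u i + v (T.erase i)) ∧
    ∀ T : Finset (Fin n), v T ≤ ∑ j ∈ T, u j := by
  have key : ∀ T : Finset (Fin n), ∀ i ∈ T, T ⊆ chain n ((i : ℕ) + 1) →
      v T ≤ u i + v (T.erase i) := by
    intro T i hi hsub
    have hunion : T ∪ chain n (i : ℕ) = chain n ((i : ℕ) + 1) := by
      ext j
      simp only [mem_union, chain, mem_filter, mem_univ, true_and]
      constructor
      · rintro (hj | hj)
        · exact (by simpa [chain] using hsub hj)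
        · omega
      · intro hj
        rcases Nat.lt_succ_iff_lt_or_eq.mp hj with h | h
        · exact Or.inr h
        · left
          have : j = i := Fin.ext h
          simpa [this] using hi
    have hinter : T ∩ chain n (i : ℕ) = T.erase i := by
      ext j
      simp only [mem_inter, chain, mem_filter, mem_univ, true_and, mem_erase]
      constructor
      · rintro ⟨hj, hlt⟩
        exact ⟨fun h => by simp [h] at hlt, hj⟩
      · rintro ⟨hne, hj⟩
        refine ⟨hj, ?_⟩
        have := (by simpa [chain] using hsub hj : (j : ℕ) < (i : ℕ) + 1)
        have : (j : ℕ) ≠ (i : ℕ) := fun h => hne (Fin.ext h)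
        omega
    have h := hsuper T (chain n (i : ℕ))
    rw [hunion, hinter] at h
    rw [hu i]
    linarith
  refine ⟨key, ?_⟩
  intro T
  induction T using Finset.strongInduction with
  | _ T ih =>
    rcases T.eq_empty_or_nonempty with rfl | hT
    · simp [h0]
    · set i := T.max' hT with hidef
      have hi : i ∈ T := T.max'_mem hT
      have hsub : T ⊆ chain n ((i : ℕ) + 1) := by
        intro j hj
        simp only [chain, mem_filter, mem_univ, true_and]
        have := T.le_max' j hj
        exact Nat.lt_succ_of_le this
      have h1 := key T i hi hsub
      have h2 := ih (T.erase i) (erase_ssubset hi)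
      calc v T ≤ u i + v (T.erase i) := h1
        _ ≤ u i + ∑ j ∈ T.erase i, u j := by linarith
        _ = ∑ j ∈ T, u j := (add_sum_erase T u hi)
end
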